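/- arXiv:2211.15953 — 5 statements merged into one kernel-verified Lean document; each statement's English description precedes it below -/
import Mathlib

section
/- Suppose the nodes 1,…,J with their symmetric neighborhood structure form a connected graph. Let Φ : Fin N → H denote the concatenation of the families Φ_1,…,Φ_J (so N = N_1 + … + N_J). Suppose ((w_j*)_{j=1}^J, (z_j*)_{j=1}^J) is an optimal solution of the consensus problem: minimize −Σ_{j=1}^J Σ_{p} ⟨w_j, Φ_j(p)⟩² over w_j, z_j ∈ H subject to w_j = P_j z_j for all j, z_j = z_q for all q ∈ Ω_j and all j, and ‖z_j‖ = 1 for all j. Then z_1* = z_2* = … = z_J*, and this common vector z* maximizes Σ_{i=1}^{N} ⟨z, Φ(i)⟩² over all z ∈ H with ‖z‖ = 1 (i.e., z* solves the global kernel PCA problem); moreover w_j* = P_j z* for every j. -/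
open scoped RealInnerProductSpace BigOperators

noncomputable section

variable {H : Type*} [NormedAddCommGroup H] [InnerProductSpace ℝ H]

/-- Apply a finite family of vectors to a coefficient vector: `Φ α = ∑ p, α p • Φ p`. -/
def applyFam {n : ℕ} (Φ : Fin n → H) (α : Fin n → ℝ) : H := ∑ p, α p • Φ p

/-- The "transpose" of a family: `Φᵀ w = (⟪Φ p, w⟫)_p`. -/
def famT {n : ℕ} (Φ : Fin n → H) (w : H) : Fin n → ℝ := fun p => ⟪Φ p, w⟫

/-- The Gram matrix of a finite family: `K p q = ⟪Φ p, Φ q⟫`. -/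
def gram {n : ℕ} (Φ : Fin n → H) : Matrix (Fin n) (Fin n) ℝ :=
  Matrix.of fun p q => ⟪Φ p, Φ q⟫

/-- The projection map `P = Φ ∘ K⁻¹ ∘ Φᵀ`. -/
def proj {n : ℕ} (Φ : Fin n → H) (w : H) : H :=
  applyFam Φ ((gram Φ)⁻¹.mulVec (famT Φ w))

/-- Squared Euclidean norm of a coefficient vector. -/
def sqnormVec {n : ℕ} (v : Fin n → ℝ) : ℝ := ∑ p, (v p) ^ 2


lemma inner_proj_eq {n : ℕ} (Φ : Fin n → H) (h : IsUnit (gram Φ)) (v : H) (p : Fin n) :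
    ⟪proj Φ v, Φ p⟫ = ⟪v, Φ p⟫ := by
  have hdet : IsUnit (gram Φ).det := (Matrix.isUnit_iff_isUnit_det _).mp h
  have hKinv : gram Φ * (gram Φ)⁻¹ = 1 := Matrix.mul_nonsing_inv _ hdet
  set α := (gram Φ)⁻¹.mulVec (famT Φ v) with hα
  have h1 : ⟪proj Φ v, Φ p⟫ = ∑ q, gram Φ p q * α q := by
    unfold proj applyFam
    rw [sum_inner]
    refine Finset.sum_congr rfl fun q _ => ?_
    rw [real_inner_smul_left]
    show α q * ⟪Φ q, Φ p⟫ = gram Φ p q * α q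
    rw [show gram Φ p q = ⟪Φ p, Φ q⟫ from rfl, real_inner_comm (Φ p) (Φ q)]
    ring
  have h2 : ∑ q, gram Φ p q * α q = (gram Φ).mulVec α p := rfl
  rw [h1, h2, hα, Matrix.mulVec_mulVec, hKinv, Matrix.one_mulVec]
  unfold famT
  exact real_inner_comm _ _

/-- Theorem 1 of the paper: if the neighborhood graph is connected
and `((w_j*), (z_j*))` is an optimal solution of the consensus problem
(minimize `−Σ_j Σ_p ⟪w_j, Φ_j p⟫²` subject to `w_j = P_j z_j`, `z_j = z_q` for
`q ∈ Ω_j`, and `‖z_j‖ = 1`), then all `z_j*` coincide with a common vector `z*`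
which maximizes the global objective `Σ_j Σ_p ⟪z, Φ_j p⟫²` (the objective of the
concatenated family) over the unit sphere, and `w_j* = P_j z*` for every `j`. -/
theorem statement_0 {J : ℕ} {N : Fin J → ℕ} (Φ : ∀ j, Fin (N j) → H)
    (hK : ∀ j, IsUnit (gram (Φ j)))
    (Ω : Fin J → Finset (Fin J)) (hne : ∀ j, (Ω j).Nonempty)
    (hself : ∀ j, j ∉ Ω j) (hsymm : ∀ j q, q ∈ Ω j ↔ j ∈ Ω q)
    (hconn : (SimpleGraph.mk (fun j q => q ∈ Ω j)
      ⟨fun j q h => (hsymm j q).mp h⟩ ⟨fun j h => hself j h⟩).Connected)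
    (w z : Fin J → H)
    (hfeas : (∀ j, w j = proj (Φ j) (z j)) ∧
      (∀ j, ∀ q ∈ Ω j, z j = z q) ∧ (∀ j, ‖z j‖ = 1))
    (hopt : ∀ w' z' : Fin J → H,
      ((∀ j, w' j = proj (Φ j) (z' j)) ∧
        (∀ j, ∀ q ∈ Ω j, z' j = z' q) ∧ (∀ j, ‖z' j‖ = 1)) →
      -(∑ j, ∑ p, ⟪w j, Φ j p⟫ ^ 2) ≤ -(∑ j, ∑ p, ⟪w' j, Φ j p⟫ ^ 2)) :
    ∃ zstar : H, (∀ j, z j = zstar) ∧ ‖zstar‖ = 1 ∧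
      (∀ u : H, ‖u‖ = 1 → ∑ j, ∑ p, ⟪u, Φ j p⟫ ^ 2 ≤ ∑ j, ∑ p, ⟪zstar, Φ j p⟫ ^ 2) ∧
      (∀ j, w j = proj (Φ j) zstar) := by
  obtain ⟨hw, hz, hnorm⟩ := hfeas
  obtain ⟨j0⟩ := hconn.nonempty
  set G := (SimpleGraph.mk (fun j q => q ∈ Ω j)
      ⟨fun j q h => (hsymm j q).mp h⟩ ⟨fun j h => hself j h⟩)
  have hreach : ∀ a b : Fin J, G.Reachable a b → z a = z b := by
    intro a b hr
    obtain ⟨wk⟩ := hr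
    induction wk with
    | nil => rfl
    | cons h p ih => exact (hz _ _ h).trans ih
  have hzconst : ∀ j, z j = z j0 := fun j => hreach j j0 (hconn j j0)
  refine ⟨z j0, hzconst, hnorm j0, ?_, ?_⟩
  · intro u hu
    have hfeas' : (∀ j, (fun j => proj (Φ j) u) j = proj (Φ j) ((fun _ => u) j)) ∧
        (∀ j, ∀ q ∈ Ω j, (fun _ => u) j = (fun _ => u) q) ∧
        (∀ j, ‖(fun _ : Fin J => u) j‖ = 1) :=
      ⟨fun j => rfl, fun _ _ _ => rfl, fun _ => hu⟩
    have := hopt _ _ hfeas'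
    have hobj : (∑ j, ∑ p, ⟪w j, Φ j p⟫ ^ 2) = ∑ j, ∑ p, ⟪z j0, Φ j p⟫ ^ 2 := by
      refine Finset.sum_congr rfl fun j _ => Finset.sum_congr rfl fun p _ => ?_
      rw [hw j, inner_proj_eq _ (hK j), hzconst j]
    have hobj' : (∑ j, ∑ p, ⟪proj (Φ j) u, Φ j p⟫ ^ 2) = ∑ j, ∑ p, ⟪u, Φ j p⟫ ^ 2 := by
      refine Finset.sum_congr rfl fun j _ => Finset.sum_congr rfl fun p _ => ?_
      rw [inner_proj_eq _ (hK j)]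
    rw [hobj, hobj'] at this
    linarith
  · intro j
    rw [hw j, hzconst j]


end
end

section
/- Fix Z = (z_j)_j and η = (η_j^{(q)}). Suppose for each j there is c_j > 0 such that the symmetric matrix ρ|Ω_j| K_j − 2 K_j² − c_j I_{N_j} is positive semidefinite. If α' = (α_j')_j minimizes the map α ↦ L(α, Z, η) over all α = (α_j)_j, then for every α: L(α', Z, η) − L(α, Z, η) ≤ −Σ_{j=1}^J (c_j/2) ‖α_j' − α_j‖². -/
open scoped RealInnerProductSpace BigOperators
open scoped Matrix

noncomputable section

variable {H : Type*} [NormedAddCommGroup H] [InnerProductSpace ℝ H]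

/-- The augmented Lagrangian `L(α, Z, η)`. -/
def Lag {J : ℕ} {N : Fin J → ℕ} (Φ : ∀ j, Fin (N j) → H) (Ω : Fin J → Finset (Fin J))
    (ρ : ℝ) (α : ∀ j, Fin (N j) → ℝ) (Z : Fin J → H) (η : Fin J → Fin J → H) : ℝ :=
  ∑ j, (-sqnormVec ((gram (Φ j)).mulVec (α j))
    + ∑ q ∈ Ω j, ⟪η j q, applyFam (Φ j) (α j) - proj (Φ j) (Z q)⟫
    + ρ / 2 * ∑ q ∈ Ω j, ‖applyFam (Φ j) (α j) - proj (Φ j) (Z q)‖ ^ 2)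

/-- The relaxed augmented Lagrangian `U(α, Z, η)`, which replaces `P_j z_q` by `z_q`
inside the quadratic penalty. -/
def Urel {J : ℕ} {N : Fin J → ℕ} (Φ : ∀ j, Fin (N j) → H) (Ω : Fin J → Finset (Fin J))
    (ρ : ℝ) (α : ∀ j, Fin (N j) → ℝ) (Z : Fin J → H) (η : Fin J → Fin J → H) : ℝ :=
  ∑ j, (-sqnormVec ((gram (Φ j)).mulVec (α j))
    + ∑ q ∈ Ω j, ⟪η j q, applyFam (Φ j) (α j) - proj (Φ j) (Z q)⟫
    + ρ / 2 * ∑ q ∈ Ω j, ‖applyFam (Φ j) (α j) - Z q‖ ^ 2)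


lemma applyFam_add' {n : ℕ} (Φ : Fin n → H) (u v : Fin n → ℝ) :
    applyFam Φ (u + v) = applyFam Φ u + applyFam Φ v := by
  simp [applyFam, add_smul, Finset.sum_add_distrib]

lemma applyFam_smul' {n : ℕ} (Φ : Fin n → H) (t : ℝ) (u : Fin n → ℝ) :
    applyFam Φ (t • u) = t • applyFam Φ u := by
  simp [applyFam, Finset.smul_sum, mul_smul]

lemma sqnorm_expand' {n : ℕ} (u v : Fin n → ℝ) (t : ℝ) :
    sqnormVec (u + t • v) = sqnormVec u + t * (2 * (u ⬝ᵥ v)) + t ^ 2 * sqnormVec v := by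
  simp only [sqnormVec, dotProduct, Finset.mul_sum, ← Finset.sum_add_distrib]
  refine Finset.sum_congr rfl fun p _ => ?_
  simp only [Pi.add_apply, Pi.smul_apply, smul_eq_mul]
  ring

lemma inner_shift' (e x y w : H) (t : ℝ) :
    ⟪e, x + t • y - w⟫ = ⟪e, x - w⟫ + t * ⟪e, y⟫ := by
  rw [show x + t • y - w = (x - w) + t • y by abel, inner_add_right, real_inner_smul_right]

lemma norm_shift' (x y w : H) (t : ℝ) :
    ‖x + t • y - w‖ ^ 2 = ‖x - w‖ ^ 2 + t * (2 * ⟪x - w, y⟫) + t ^ 2 * ‖y‖ ^ 2 := by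
  rw [show x + t • y - w = (x - w) + t • y by abel, norm_add_sq_real,
    real_inner_smul_right, norm_smul]
  simp [mul_pow, sq_abs]
  ring

lemma dotProduct_self' {n : ℕ} (v : Fin n → ℝ) : v ⬝ᵥ v = sqnormVec v := by
  simp [sqnormVec, dotProduct, sq]

lemma gram_transpose {n : ℕ} (Φ : Fin n → H) : (gram Φ)ᵀ = gram Φ := by
  ext p q
  simp only [Matrix.transpose_apply, gram, Matrix.of_apply]
  exact real_inner_comm _ _

lemma gram_quad {n : ℕ} (Φ : Fin n → H) (v : Fin n → ℝ) :
    v ⬝ᵥ (gram Φ).mulVec v = ‖applyFam Φ v‖ ^ 2 := by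
  rw [← real_inner_self_eq_norm_sq]
  simp only [applyFam, sum_inner, inner_sum, real_inner_smul_left, real_inner_smul_right]
  simp only [dotProduct, Matrix.mulVec, gram, Matrix.of_apply]
  refine Finset.sum_congr rfl fun p _ => ?_
  rw [Finset.mul_sum]
  refine Finset.sum_congr rfl fun q _ => ?_
  rw [real_inner_comm (Φ p) (Φ q)]
  ring

lemma gram_sq_quad {n : ℕ} (Φ : Fin n → H) (v : Fin n → ℝ) :
    v ⬝ᵥ (gram Φ * gram Φ).mulVec v = sqnormVec ((gram Φ).mulVec v) := by
  rw [← Matrix.mulVec_mulVec, Matrix.dotProduct_mulVec]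
  conv_lhs => rw [← gram_transpose Φ, Matrix.vecMul_transpose]
  rw [gram_transpose, dotProduct_self']

/-- if for each `j` there is `c_j > 0` such that
`ρ|Ω_j| K_j − 2 K_j² − c_j I` is positive semidefinite and `α'` minimizes
`α ↦ L(α, Z, η)`, then for every `α`:
`L(α', Z, η) − L(α, Z, η) ≤ −Σ_j (c_j/2) ‖α_j' − α_j‖²`. -/
theorem statement_4 {J : ℕ} {N : Fin J → ℕ} (Φ : ∀ j, Fin (N j) → H)
    (hK : ∀ j, IsUnit (gram (Φ j)))
    (Ω : Fin J → Finset (Fin J)) (hne : ∀ j, (Ω j).Nonempty)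
    (hself : ∀ j, j ∉ Ω j) (hsymm : ∀ j q, q ∈ Ω j ↔ j ∈ Ω q)
    (ρ : ℝ) (hρ : 0 < ρ)
    (c : Fin J → ℝ) (hc : ∀ j, 0 < c j)
    (hpsd : ∀ j, ((ρ * ((Ω j).card : ℝ)) • gram (Φ j)
      - (2 : ℝ) • (gram (Φ j) * gram (Φ j))
      - c j • (1 : Matrix (Fin (N j)) (Fin (N j)) ℝ)).PosSemidef)
    (Z : Fin J → H) (η : Fin J → Fin J → H)
    (α' : ∀ j, Fin (N j) → ℝ)
    (hmin : ∀ β : ∀ j, Fin (N j) → ℝ, Lag Φ Ω ρ α' Z η ≤ Lag Φ Ω ρ β Z η) :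
    ∀ α : ∀ j, Fin (N j) → ℝ,
      Lag Φ Ω ρ α' Z η - Lag Φ Ω ρ α Z η
        ≤ -∑ j, c j / 2 * sqnormVec (α' j - α j) := by
  intro α
  classical
  set h : ∀ j, Fin (N j) → ℝ := fun j => α j - α' j with hh
  set A : ℝ := ∑ j, (-(2 * (((gram (Φ j)).mulVec (α' j)) ⬝ᵥ ((gram (Φ j)).mulVec (h j))))
      + (∑ q ∈ Ω j, ⟪η j q, applyFam (Φ j) (h j)⟫)
      + ρ / 2 * ∑ q ∈ Ω j,
          2 * ⟪applyFam (Φ j) (α' j) - proj (Φ j) (Z q), applyFam (Φ j) (h j)⟫) with hA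
  set B : ℝ := ∑ j, (-sqnormVec ((gram (Φ j)).mulVec (h j))
      + ρ / 2 * (((Ω j).card : ℝ) * ‖applyFam (Φ j) (h j)‖ ^ 2)) with hB
  have hexp : ∀ t : ℝ, Lag Φ Ω ρ (fun j => α' j + t • h j) Z η
      = Lag Φ Ω ρ α' Z η + t * A + t ^ 2 * B := by
    intro t
    rw [hA, hB, Finset.mul_sum Finset.univ _ (t ^ 2), Finset.mul_sum Finset.univ _ t]
    unfold Lag
    rw [← Finset.sum_add_distrib, ← Finset.sum_add_distrib]
    refine Finset.sum_congr rfl fun j _ => ?_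
    have e0 : (gram (Φ j)).mulVec (α' j + t • h j)
        = (gram (Φ j)).mulVec (α' j) + t • (gram (Φ j)).mulVec (h j) := by
      rw [Matrix.mulVec_add, Matrix.mulVec_smul]
    have eA : applyFam (Φ j) (α' j + t • h j)
        = applyFam (Φ j) (α' j) + t • applyFam (Φ j) (h j) := by
      rw [applyFam_add', applyFam_smul']
    have e1 : ∑ q ∈ Ω j,
          ⟪η j q, applyFam (Φ j) (α' j) + t • applyFam (Φ j) (h j) - proj (Φ j) (Z q)⟫
        = (∑ q ∈ Ω j, ⟪η j q, applyFam (Φ j) (α' j) - proj (Φ j) (Z q)⟫)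
          + t * ∑ q ∈ Ω j, ⟪η j q, applyFam (Φ j) (h j)⟫ := by
      rw [Finset.mul_sum, ← Finset.sum_add_distrib]
      exact Finset.sum_congr rfl fun q _ => inner_shift' _ _ _ _ _
    have e2 : ∑ q ∈ Ω j,
          ‖applyFam (Φ j) (α' j) + t • applyFam (Φ j) (h j) - proj (Φ j) (Z q)‖ ^ 2
        = (∑ q ∈ Ω j, ‖applyFam (Φ j) (α' j) - proj (Φ j) (Z q)‖ ^ 2)
          + t * ∑ q ∈ Ω j,
              2 * ⟪applyFam (Φ j) (α' j) - proj (Φ j) (Z q), applyFam (Φ j) (h j)⟫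
          + t ^ 2 * (((Ω j).card : ℝ) * ‖applyFam (Φ j) (h j)‖ ^ 2) := by
      have e3 : t ^ 2 * (((Ω j).card : ℝ) * ‖applyFam (Φ j) (h j)‖ ^ 2)
          = ∑ _q ∈ Ω j, t ^ 2 * ‖applyFam (Φ j) (h j)‖ ^ 2 := by
        rw [Finset.sum_const, nsmul_eq_mul]; ring
      rw [Finset.mul_sum, e3, ← Finset.sum_add_distrib, ← Finset.sum_add_distrib]
      exact Finset.sum_congr rfl fun q _ => norm_shift' _ _ _ _
    simp only [e0, eA, e1, e2, sqnorm_expand']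
    ring
  have hCB : (∑ j, c j / 2 * sqnormVec (h j)) ≤ B := by
    rw [hB]
    refine Finset.sum_le_sum fun j _ => ?_
    have hp := (hpsd j).dotProduct_mulVec_nonneg (h j)
    have hstar : star (h j) = h j := by
      funext p; simp
    rw [hstar, Matrix.sub_mulVec, Matrix.sub_mulVec, Matrix.smul_mulVec,
      Matrix.smul_mulVec, Matrix.smul_mulVec, Matrix.one_mulVec,
      dotProduct_sub, dotProduct_sub, dotProduct_smul,
      dotProduct_smul, dotProduct_smul, smul_eq_mul, smul_eq_mul,
      smul_eq_mul, gram_quad, gram_sq_quad, dotProduct_self'] at hp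
    nlinarith [hp]
  have hC0 : (0:ℝ) ≤ ∑ j, c j / 2 * sqnormVec (h j) := by
    refine Finset.sum_nonneg fun j _ => ?_
    have : (0:ℝ) ≤ sqnormVec (h j) := Finset.sum_nonneg fun p _ => sq_nonneg _
    have := (hc j).le
    positivity
  have hB0 : (0:ℝ) ≤ B := le_trans hC0 hCB
  have hmin' : ∀ t : ℝ, 0 ≤ t * A + t ^ 2 * B := by
    intro t
    have := hmin (fun j => α' j + t • h j)
    rw [hexp t] at this
    linarith
  have hA0 : 0 ≤ A := by
    by_contra hneg
    push_neg at hneg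
    set t : ℝ := -A / (2 * B + 1) with ht
    have htpos : 0 < t := by
      apply div_pos (by linarith) (by linarith)
    have hAtB : A + t * B < 0 := by
      have : t * B ≤ -A / 2 := by
        rw [ht, div_mul_eq_mul_div, div_le_div_iff₀ (by linarith) (by norm_num)]
        nlinarith
      linarith
    have : t * A + t ^ 2 * B < 0 := by
      have : t * (A + t * B) < 0 := mul_neg_of_pos_of_neg htpos hAtB
      nlinarith
    linarith [hmin' t]
  have hone : (fun j => α' j + (1:ℝ) • h j) = α := by
    funext j
    rw [one_smul, hh]
    funext p
    simp
  have hLagα : Lag Φ Ω ρ α Z η = Lag Φ Ω ρ α' Z η + A + B := by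
    have := hexp 1
    rw [hone] at this
    simpa using this
  have hsq : ∀ j, sqnormVec (α' j - α j) = sqnormVec (h j) := by
    intro j
    rw [hh]
    refine Finset.sum_congr rfl fun p _ => ?_
    simp only [Pi.sub_apply]
    ring
  have : Lag Φ Ω ρ α' Z η - Lag Φ Ω ρ α Z η ≤ -∑ j, c j / 2 * sqnormVec (h j) := by
    rw [hLagα]; linarith
  calc Lag Φ Ω ρ α' Z η - Lag Φ Ω ρ α Z η ≤ -∑ j, c j / 2 * sqnormVec (h j) := this
    _ = -∑ j, c j / 2 * sqnormVec (α' j - α j) := by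
        simp only [hsq]


end
end

section
/- Let Φ : Fin N → H be a finite family of vectors with Gram matrix K ∈ ℝ^{N×N}, (K)_{pq} = ⟨Φ(p), Φ(q)⟩. Let λ₁ > 0 be the largest eigenvalue of K and let α ∈ ℝ^N satisfy K α = λ₁ α and ‖α‖² = 1/λ₁. Then w* := Σ_p α_p Φ(p) satisfies ‖w*‖ = 1, Σ_{i=1}^N ⟨w*, Φ(i)⟩² = λ₁, and Σ_{i=1}^N ⟨w, Φ(i)⟩² ≤ λ₁ for every w ∈ H with ‖w‖ ≤ 1. Hence w* solves the kernel PCA problem: it maximizes Σ_i ⟨w, Φ(i)⟩² over the unit sphere of H. -/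
open scoped RealInnerProductSpace BigOperators

noncomputable section

variable {H : Type*} [NormedAddCommGroup H] [InnerProductSpace ℝ H]

/-- Rayleigh-quotient bound: the quadratic form of a real symmetric matrix is bounded
by its largest eigenvalue times the squared norm. -/
lemma quad_le_of_eig {N : ℕ} (K : Matrix (Fin N) (Fin N) ℝ) (h : K.IsHermitian) (lam1 : ℝ)
    (hb : ∀ i, h.eigenvalues i ≤ lam1) (v : Fin N → ℝ) :
    dotProduct v (K.mulVec v) ≤ lam1 * ∑ i, v i ^ 2 := by
  let x : EuclideanSpace ℝ (Fin N) := (WithLp.equiv 2 _).symm v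
  let B := h.eigenvectorBasis
  have hsymm := (Matrix.isHermitian_iff_isSymmetric.1 h)
  have hTx : ∀ y : EuclideanSpace ℝ (Fin N), Matrix.toEuclideanLin K y = (WithLp.equiv 2 _).symm (K.mulVec ((WithLp.equiv 2 _) y)) := by
    intro y; rfl
  have h1 : dotProduct v (K.mulVec v) = ⟪x, Matrix.toEuclideanLin K x⟫ := by
    rw [hTx]
    show ∑ i, v i * (K.mulVec v) i = _
    simp only [x, PiLp.inner_apply, RCLike.inner_apply, conj_trivial, WithLp.equiv_symm_apply, PiLp.toLp_apply, Equiv.apply_symm_apply]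
    exact Finset.sum_congr rfl fun i _ => mul_comm _ _
  have h2 : ∀ y z : EuclideanSpace ℝ (Fin N), ⟪y, z⟫ = ∑ i, (B.repr y i) * (B.repr z i) := by
    intro y z
    rw [← B.sum_inner_mul_inner y z]
    refine Finset.sum_congr rfl fun i _ => ?_
    rw [B.repr_apply_apply, B.repr_apply_apply, real_inner_comm]
  have h3 : ∀ i, B.repr (Matrix.toEuclideanLin K x) i = h.eigenvalues i * B.repr x i := by
    intro i
    rw [B.repr_apply_apply, B.repr_apply_apply, ← hsymm (B i) x]
    have hKB : Matrix.toEuclideanLin K (B i) = (h.eigenvalues i : ℝ) • (B i) := by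
      apply (WithLp.equiv 2 _).injective
      ext j
      have := congrFun (h.mulVec_eigenvectorBasis i) j
      simpa [hTx] using this
    rw [hKB, real_inner_smul_left]
  have h4 : ∑ i, v i ^ 2 = ∑ i, (B.repr x i) ^ 2 := by
    have hx : ∑ i, v i ^ 2 = ⟪x, x⟫ := by
      simp only [x, PiLp.inner_apply, RCLike.inner_apply, conj_trivial, WithLp.equiv_symm_apply, PiLp.toLp_apply, Equiv.apply_symm_apply]
      exact Finset.sum_congr rfl fun i _ => sq (v i)
    rw [hx, h2]
    simp [sq]
  rw [h1, h2, h4, Finset.mul_sum]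
  apply Finset.sum_le_sum
  intro i _
  rw [h3]
  calc B.repr x i * (h.eigenvalues i * B.repr x i) = h.eigenvalues i * (B.repr x i)^2 := by ring
    _ ≤ lam1 * (B.repr x i)^2 := by nlinarith [hb i, sq_nonneg (B.repr x i)]

/-- if `λ₁ > 0` is the largest eigenvalue of the Gram matrix `K`
and `α` satisfies `K α = λ₁ α` with `‖α‖² = 1/λ₁`, then `w* = Φ α` has unit norm,
achieves `Σ_i ⟪w*, Φ i⟫² = λ₁`, and `Σ_i ⟪w, Φ i⟫² ≤ λ₁` for every `w` with
`‖w‖ ≤ 1`; hence `w*` solves the kernel PCA problem. -/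
theorem statement_8 {N : ℕ} (Φ : Fin N → H) (hherm : (gram Φ).IsHermitian)
    (lam1 : ℝ) (hgreatest : IsGreatest (Set.range hherm.eigenvalues) lam1)
    (hpos : 0 < lam1) (α : Fin N → ℝ)
    (heig : (gram Φ).mulVec α = lam1 • α) (hnorm : sqnormVec α = 1 / lam1) :
    ‖applyFam Φ α‖ = 1 ∧
    (∑ i, ⟪applyFam Φ α, Φ i⟫ ^ 2 = lam1) ∧
    (∀ w : H, ‖w‖ ≤ 1 → ∑ i, ⟪w, Φ i⟫ ^ 2 ≤ lam1) := by
  -- basic computation: ⟪Φ i, applyFam Φ β⟫ = (K β) i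
  have hx : ∀ (β : Fin N → ℝ) (i : Fin N), ⟪Φ i, applyFam Φ β⟫ = ((gram Φ).mulVec β) i := by
    intro β i
    simp only [applyFam, inner_sum, real_inner_smul_right, gram, Matrix.mulVec,
      dotProduct, Matrix.of_apply]
    exact Finset.sum_congr rfl fun p _ => mul_comm _ _
  have hKα : ∀ i, ⟪Φ i, applyFam Φ α⟫ = lam1 * α i := by
    intro i
    rw [hx, heig]
    simp
  have hsum : ∑ p, (α p)^2 = 1 / lam1 := hnorm
  -- ⟪applyFam Φ β, y⟫ = ∑ β p * ⟪Φ p, y⟫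
  have hleft : ∀ (β : Fin N → ℝ) (y : H), ⟪applyFam Φ β, y⟫ = ∑ p, β p * ⟪Φ p, y⟫ := by
    intro β y
    simp [applyFam, sum_inner, real_inner_smul_left]
  have hnormsq : ⟪applyFam Φ α, applyFam Φ α⟫ = 1 := by
    rw [hleft]
    have : ∀ p : Fin N, p ∈ Finset.univ → α p * ⟪Φ p, applyFam Φ α⟫ = lam1 * (α p)^2 := by
      intro p _; rw [hKα]; ring
    rw [Finset.sum_congr rfl this, ← Finset.mul_sum, hsum]
    field_simp
  have hα1 : ‖applyFam Φ α‖ = 1 := by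
    have h := real_inner_self_eq_norm_sq (applyFam Φ α)
    rw [hnormsq] at h
    nlinarith [norm_nonneg (applyFam Φ α)]
  refine ⟨hα1, ?_, ?_⟩
  · have : ∀ i : Fin N, i ∈ Finset.univ → ⟪applyFam Φ α, Φ i⟫ ^ 2 = lam1^2 * (α i)^2 := by
      intro i _
      rw [real_inner_comm, hKα]
      ring
    rw [Finset.sum_congr rfl this, ← Finset.mul_sum, hsum]
    field_simp
  · intro w hw
    set v : Fin N → ℝ := fun p => ⟪Φ p, w⟫ with hv
    set S : ℝ := ∑ i, ⟪w, Φ i⟫ ^ 2 with hSdef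
    have hSnn : 0 ≤ S := Finset.sum_nonneg fun i _ => sq_nonneg _
    have hSv : S = ∑ i, v i ^ 2 := by
      refine Finset.sum_congr rfl fun i _ => ?_
      rw [hv, real_inner_comm]
    have hSinner : S = ⟪w, applyFam Φ v⟫ := by
      rw [hSdef]
      simp only [applyFam, inner_sum, real_inner_smul_right]
      refine Finset.sum_congr rfl fun i _ => ?_
      rw [hv, real_inner_comm (Φ i) w]
      ring
    have hΦv : ⟪applyFam Φ v, applyFam Φ v⟫ = dotProduct v ((gram Φ).mulVec v) := by
      rw [hleft]
      refine Finset.sum_congr rfl fun p _ => ?_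
      rw [hx]
    have hquad := quad_le_of_eig (gram Φ) hherm lam1
      (fun i => hgreatest.2 ⟨i, rfl⟩) v
    have hnv : ‖applyFam Φ v‖^2 ≤ lam1 * S := by
      rw [← real_inner_self_eq_norm_sq, hΦv, hSv]
      exact hquad
    have hcs : S ≤ ‖applyFam Φ v‖ := by
      rw [hSinner]
      calc ⟪w, applyFam Φ v⟫ ≤ ‖w‖ * ‖applyFam Φ v‖ := real_inner_le_norm _ _
        _ ≤ 1 * ‖applyFam Φ v‖ := by
            exact mul_le_mul_of_nonneg_right hw (norm_nonneg _)
        _ = ‖applyFam Φ v‖ := one_mul _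
    nlinarith [norm_nonneg (applyFam Φ v), sq_nonneg (S - lam1)]

end
end

section
/- Fix α = (α_j)_j and η = (η_j^{(q)}). The function Z ↦ U(α, Z, η), defined for Z = (z_k)_{k=1}^J ∈ H^J, has a unique global (unconstrained) minimizer Ẑ = (ẑ_k)_k given by ẑ_k = (1/|Ω_k|) Σ_{l ∈ Ω_k} ( Φ_l α_l + (1/ρ) P_l η_l^{(k)} ) for each k = 1,…,J. -/
open scoped RealInnerProductSpace BigOperators

noncomputable section

variable {H : Type*} [NormedAddCommGroup H] [InnerProductSpace ℝ H]

lemma gram_symm {n : ℕ} (Φ : Fin n → H) : (gram Φ).transpose = gram Φ := by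
  ext p q
  simp [gram, Matrix.transpose_apply, real_inner_comm]

lemma gram_inv_symm {n : ℕ} (Φ : Fin n → H) (p q : Fin n) :
    (gram Φ)⁻¹ p q = (gram Φ)⁻¹ q p := by
  have h : ((gram Φ)⁻¹).transpose = (gram Φ)⁻¹ := by
    rw [Matrix.transpose_nonsing_inv, gram_symm]
  conv_lhs => rw [← h]
  rfl

lemma proj_adjoint {n : ℕ} (Φ : Fin n → H) (w z : H) :
    ⟪w, proj Φ z⟫ = ⟪proj Φ w, z⟫ := by
  simp only [proj, applyFam, famT, Matrix.mulVec, dotProduct,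
    inner_sum, sum_inner, real_inner_smul_right, real_inner_smul_left, Finset.sum_mul]
  rw [Finset.sum_comm]
  refine Finset.sum_congr rfl fun p _ => Finset.sum_congr rfl fun q _ => ?_
  rw [gram_inv_symm Φ q p, real_inner_comm (Φ q) w]
  ring

lemma quad_diff (a : ℝ) (z w : H) :
    (a / 2 * ‖z‖ ^ 2 - ⟪a • w, z⟫) - (a / 2 * ‖w‖ ^ 2 - ⟪a • w, w⟫)
      = a / 2 * ‖z - w‖ ^ 2 := by
  rw [norm_sub_sq_real, real_inner_smul_left, real_inner_smul_left,
    real_inner_self_eq_norm_sq, real_inner_comm w z]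
  ring

lemma Urel_eq {J : ℕ} {N : Fin J → ℕ} (Φ : ∀ j, Fin (N j) → H) (Ω : Fin J → Finset (Fin J))
    (hsymm : ∀ j q, q ∈ Ω j ↔ j ∈ Ω q) (ρ : ℝ)
    (α : ∀ j, Fin (N j) → ℝ) (η : Fin J → Fin J → H) (Z : Fin J → H) :
    Urel Φ Ω ρ α Z η
      = (∑ j, (-sqnormVec ((gram (Φ j)).mulVec (α j))
          + ∑ q ∈ Ω j, ⟪η j q, applyFam (Φ j) (α j)⟫
          + ρ / 2 * ∑ q ∈ Ω j, ‖applyFam (Φ j) (α j)‖ ^ 2))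
        + ∑ k, (ρ * (Ω k).card / 2 * ‖Z k‖ ^ 2
            - ⟪∑ l ∈ Ω k, (proj (Φ l) (η l k) + ρ • applyFam (Φ l) (α l)), Z k⟫) := by
  have step1 : Urel Φ Ω ρ α Z η
      = (∑ j, (-sqnormVec ((gram (Φ j)).mulVec (α j))
          + ∑ q ∈ Ω j, ⟪η j q, applyFam (Φ j) (α j)⟫
          + ρ / 2 * ∑ q ∈ Ω j, ‖applyFam (Φ j) (α j)‖ ^ 2))
        + ∑ j, ∑ q ∈ Ω j,
            (ρ / 2 * ‖Z q‖ ^ 2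
              - ⟪proj (Φ j) (η j q) + ρ • applyFam (Φ j) (α j), Z q⟫) := by
    rw [← Finset.sum_add_distrib]
    unfold Urel
    refine Finset.sum_congr rfl fun j _ => ?_
    set X := applyFam (Φ j) (α j) with hX
    have hterm : ∀ q ∈ Ω j,
        ⟪η j q, X - proj (Φ j) (Z q)⟫ + ρ / 2 * ‖X - Z q‖ ^ 2
          = (⟪η j q, X⟫ + ρ / 2 * ‖X‖ ^ 2)
            + (ρ / 2 * ‖Z q‖ ^ 2 - ⟪proj (Φ j) (η j q) + ρ • X, Z q⟫) := by
      intro q _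
      rw [inner_sub_right, proj_adjoint, norm_sub_sq_real, inner_add_left,
        real_inner_smul_left]
      ring
    have hL : (∑ q ∈ Ω j, ⟪η j q, X - proj (Φ j) (Z q)⟫)
        + ρ / 2 * ∑ q ∈ Ω j, ‖X - Z q‖ ^ 2
        = ∑ q ∈ Ω j, (⟪η j q, X - proj (Φ j) (Z q)⟫ + ρ / 2 * ‖X - Z q‖ ^ 2) := by
      rw [Finset.mul_sum, Finset.sum_add_distrib]
    have hR : ∑ q ∈ Ω j, ((⟪η j q, X⟫ + ρ / 2 * ‖X‖ ^ 2)
          + (ρ / 2 * ‖Z q‖ ^ 2 - ⟪proj (Φ j) (η j q) + ρ • X, Z q⟫))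
        = ((∑ q ∈ Ω j, ⟪η j q, X⟫) + ρ / 2 * ∑ q ∈ Ω j, ‖X‖ ^ 2)
          + ∑ q ∈ Ω j, (ρ / 2 * ‖Z q‖ ^ 2 - ⟪proj (Φ j) (η j q) + ρ • X, Z q⟫) := by
      rw [Finset.sum_add_distrib, Finset.sum_add_distrib, Finset.mul_sum]
    have hmid := Finset.sum_congr rfl hterm
    linarith [hL, hR, hmid]
  rw [step1]
  congr 1
  have hsw : ∑ j, ∑ q ∈ Ω j,
        (ρ / 2 * ‖Z q‖ ^ 2 - ⟪proj (Φ j) (η j q) + ρ • applyFam (Φ j) (α j), Z q⟫)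
      = ∑ q, ∑ j ∈ Ω q,
        (ρ / 2 * ‖Z q‖ ^ 2 - ⟪proj (Φ j) (η j q) + ρ • applyFam (Φ j) (α j), Z q⟫) :=
    Finset.sum_comm' (fun j q => by simp [hsymm j q])
  rw [hsw]
  refine Finset.sum_congr rfl fun k _ => ?_
  rw [Finset.sum_sub_distrib, Finset.sum_const, ← sum_inner, nsmul_eq_mul]
  ring_nf

/-- for fixed `α` and `η`, the map `Z ↦ U(α, Z, η)` has a unique
global unconstrained minimizer `Ẑ`, given componentwise by
`ẑ_k = (1/|Ω_k|) Σ_{l∈Ω_k} (Φ_l α_l + (1/ρ) P_l η_l^{(k)})`. -/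
theorem statement_11 {J : ℕ} {N : Fin J → ℕ} (Φ : ∀ j, Fin (N j) → H)
    (hK : ∀ j, IsUnit (gram (Φ j)))
    (Ω : Fin J → Finset (Fin J)) (hne : ∀ j, (Ω j).Nonempty)
    (hself : ∀ j, j ∉ Ω j) (hsymm : ∀ j q, q ∈ Ω j ↔ j ∈ Ω q)
    (ρ : ℝ) (hρ : 0 < ρ)
    (α : ∀ j, Fin (N j) → ℝ) (η : Fin J → Fin J → H) :
    let Zhat : Fin J → H := fun k =>
      (((Ω k).card : ℝ))⁻¹ •
        ∑ l ∈ Ω k, (applyFam (Φ l) (α l) + ρ⁻¹ • proj (Φ l) (η l k))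
    (∀ Z : Fin J → H, Urel Φ Ω ρ α Zhat η ≤ Urel Φ Ω ρ α Z η) ∧
    (∀ Z : Fin J → H, (∀ Z' : Fin J → H, Urel Φ Ω ρ α Z η ≤ Urel Φ Ω ρ α Z' η) →
      Z = Zhat) := by
  intro Zhat
  have hcard : ∀ k, (0 : ℝ) < ((Ω k).card : ℝ) := fun k => by
    exact_mod_cast Finset.card_pos.mpr (hne k)
  have hb : ∀ k, (∑ l ∈ Ω k, (proj (Φ l) (η l k) + ρ • applyFam (Φ l) (α l)))
      = (ρ * ((Ω k).card : ℝ)) • Zhat k := by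
    intro k
    have hm : ((Ω k).card : ℝ) ≠ 0 := (hcard k).ne'
    show _ = (ρ * ((Ω k).card : ℝ)) • ((((Ω k).card : ℝ))⁻¹ •
        ∑ l ∈ Ω k, (applyFam (Φ l) (α l) + ρ⁻¹ • proj (Φ l) (η l k)))
    rw [smul_smul, mul_assoc, mul_inv_cancel₀ hm, mul_one, Finset.smul_sum]
    refine Finset.sum_congr rfl fun l _ => ?_
    rw [smul_add, smul_inv_smul₀ hρ.ne', add_comm]
  have key : ∀ Z : Fin J → H, Urel Φ Ω ρ α Z η
      = Urel Φ Ω ρ α Zhat η + ∑ k, ρ * ((Ω k).card : ℝ) / 2 * ‖Z k - Zhat k‖ ^ 2 := by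
    intro Z
    rw [Urel_eq Φ Ω hsymm ρ α η Z, Urel_eq Φ Ω hsymm ρ α η Zhat]
    rw [add_assoc]
    congr 1
    rw [← Finset.sum_add_distrib]
    refine Finset.sum_congr rfl fun k _ => ?_
    rw [hb k]
    have := quad_diff (ρ * ((Ω k).card : ℝ)) (Z k) (Zhat k)
    linarith
  have hterm_nonneg : ∀ (Z : Fin J → H) (k : Fin J), k ∈ (Finset.univ : Finset (Fin J)) →
      0 ≤ ρ * ((Ω k).card : ℝ) / 2 * ‖Z k - Zhat k‖ ^ 2 := by
    intro Z k _
    have := hcard k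
    positivity
  constructor
  · intro Z
    rw [key Z]
    have := Finset.sum_nonneg (hterm_nonneg Z)
    linarith
  · intro Z hmin
    have h1 : Urel Φ Ω ρ α Z η ≤ Urel Φ Ω ρ α Zhat η := hmin Zhat
    rw [key Z] at h1
    have hS : ∑ k, ρ * ((Ω k).card : ℝ) / 2 * ‖Z k - Zhat k‖ ^ 2 = 0 := by
      have := Finset.sum_nonneg (hterm_nonneg Z)
      linarith
    have hzero := (Finset.sum_eq_zero_iff_of_nonneg (hterm_nonneg Z)).mp hS
    funext k
    have hk := hzero k (Finset.mem_univ k)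
    have hpos : 0 < ρ * ((Ω k).card : ℝ) / 2 := by
      have := hcard k; exact div_pos (mul_pos hρ this) (by norm_num)
    have : ‖Z k - Zhat k‖ ^ 2 = 0 := by
      rcases mul_eq_zero.mp hk with h | h
      · exact absurd h hpos.ne'
      · exact h
    have h0 : Z k - Zhat k = 0 := by
      rwa [pow_eq_zero_iff (by norm_num), norm_eq_zero] at this
    exact sub_eq_zero.mp h0


end
end

section
/- Fix j, Z = (z_q) and multipliers η_j^{(q)}, q ∈ Ω_j. Suppose α_j⁺ ∈ ℝ^{N_j} satisfies the stationarity equation of the α-subproblem, (ρ|Ω_j| K_j − 2 K_j²) α_j⁺ = Σ_{q∈Ω_j} Φ_jᵀ(ρ z_q − η_j^{(q)}), and define the updated multipliers by η_j^{(q),+} = η_j^{(q)} + ρ(Φ_j α_j⁺ − P_j z_q) for q ∈ Ω_j. Then the dual-feasibility identity 2 K_j² α_j⁺ = Σ_{q∈Ω_j} Φ_jᵀ η_j^{(q),+} holds. -/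
open scoped RealInnerProductSpace BigOperators

noncomputable section

variable {H : Type*} [NormedAddCommGroup H] [InnerProductSpace ℝ H]

/-! Since `K` is invertible, `Φᵀ ∘ P = Φᵀ`, so applying `Φᵀ` to the multiplier update gives
`Φᵀ η⁺ = Φᵀ η + ρ (K α⁺ - Φᵀ z)`. Summed over `Ω`, this is the stationarity equation
rearranged. -/

lemma famT_add {n : ℕ} (Φ : Fin n → H) (v w : H) :
    famT Φ (v + w) = famT Φ v + famT Φ w := by
  funext p; simp [famT, inner_add_right]

lemma famT_sub {n : ℕ} (Φ : Fin n → H) (v w : H) :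
    famT Φ (v - w) = famT Φ v - famT Φ w := by
  funext p; simp [famT, inner_sub_right]

lemma famT_smul {n : ℕ} (Φ : Fin n → H) (c : ℝ) (w : H) :
    famT Φ (c • w) = c • famT Φ w := by
  funext p; simp [famT, inner_smul_right]

lemma famT_applyFam {n : ℕ} (Φ : Fin n → H) (α : Fin n → ℝ) :
    famT Φ (applyFam Φ α) = (gram Φ).mulVec α := by
  funext p
  simp [famT, applyFam, gram, Matrix.mulVec, dotProduct, inner_sum, inner_smul_right, mul_comm]

lemma famT_proj {n : ℕ} (Φ : Fin n → H) (hK : IsUnit (gram Φ)) (w : H) :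
    famT Φ (proj Φ w) = famT Φ w := by
  rw [proj, famT_applyFam, Matrix.mulVec_mulVec,
    Matrix.mul_nonsing_inv _ ((Matrix.isUnit_iff_isUnit_det _).1 hK), Matrix.one_mulVec]

theorem statement_12_general {n : ℕ} (Φ : Fin n → H) (hK : IsUnit (gram Φ))
    {ι : Type*} (Ω : Finset ι) (ρ : ℝ)
    (z η ηplus : ι → H) (αplus : Fin n → ℝ)
    (hstat : ((ρ * (Ω.card : ℝ)) • gram Φ - (2 : ℝ) • (gram Φ * gram Φ)).mulVec αplus
      = ∑ q ∈ Ω, famT Φ (ρ • z q - η q))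
    (hdual : ∀ q ∈ Ω, ηplus q = η q + ρ • (applyFam Φ αplus - proj Φ (z q))) :
    (2 : ℝ) • ((gram Φ * gram Φ).mulVec αplus) = ∑ q ∈ Ω, famT Φ (ηplus q) := by
  have hupdate : ∑ q ∈ Ω, famT Φ (ηplus q) = ∑ q ∈ Ω, famT Φ (η q)
      + (ρ * Ω.card) • (gram Φ).mulVec αplus - ρ • ∑ q ∈ Ω, famT Φ (z q) := by
    rw [Finset.sum_congr rfl fun q hq => by
      rw [hdual q hq, famT_add, famT_smul, famT_sub, famT_applyFam, famT_proj Φ hK]]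
    simp only [Finset.sum_add_distrib, Finset.sum_const, ← Finset.smul_sum, Finset.sum_sub_distrib]
    module
  have hstat' : (ρ * Ω.card) • (gram Φ).mulVec αplus - (2 : ℝ) • (gram Φ * gram Φ).mulVec αplus
      = ρ • ∑ q ∈ Ω, famT Φ (z q) - ∑ q ∈ Ω, famT Φ (η q) := by
    simpa only [Matrix.sub_mulVec, Matrix.smul_mulVec, famT_sub, famT_smul,
      Finset.sum_sub_distrib, ← Finset.smul_sum] using hstat
  rw [hupdate]
  linear_combination (norm := module) -hstat'

/-- if `α⁺` satisfies the stationarity equation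
`(ρ|Ω_j| K_j − 2 K_j²) α⁺ = Σ_{q∈Ω_j} Φ_jᵀ(ρ z_q − η_j^{(q)})` and the multipliers
are updated by `η_j^{(q),+} = η_j^{(q)} + ρ(Φ_j α⁺ − P_j z_q)`, then the
dual-feasibility identity `2 K_j² α⁺ = Σ_{q∈Ω_j} Φ_jᵀ η_j^{(q),+}` holds. -/
theorem statement_12 {n : ℕ} (Φ : Fin n → H) (hK : IsUnit (gram Φ))
    {ι : Type*} (Ω : Finset ι) (hΩ : Ω.Nonempty) (ρ : ℝ) (hρ : 0 < ρ)
    (z η ηplus : ι → H) (αplus : Fin n → ℝ)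
    (hstat : ((ρ * (Ω.card : ℝ)) • gram Φ - (2 : ℝ) • (gram Φ * gram Φ)).mulVec αplus
      = ∑ q ∈ Ω, famT Φ (ρ • z q - η q))
    (hdual : ∀ q ∈ Ω, ηplus q = η q + ρ • (applyFam Φ αplus - proj Φ (z q))) :
    (2 : ℝ) • ((gram Φ * gram Φ).mulVec αplus) = ∑ q ∈ Ω, famT Φ (ηplus q) :=
  statement_12_general Φ hK Ω ρ z η ηplus αplus hstat hdual

end
end
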